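/- Any algebraic curvature tensor R on ℝⁿ (n ≥ 4) that is strictly 1/4-pinched, in the sense that there exist K_min, K_max with 0 < K_max < 4K_min and K_min(|X|²|Y|² − ⟨X,Y⟩²) ≤ R(X,Y,X,Y) ≤ K_max(|X|²|Y|² − ⟨X,Y⟩²) for all X, Y, has positive isotropic curvature, assuming Berger's inequality |R(e₁,e₂,e₃,e₄)| ≤ (2/3)(K_max − K_min) for orthonormal four-frames. -/

import Mathlib

/-!
On an orthonormal four-frame the pinching gives each of the four sectional terms the lower bound
`Kmin`, while Berger's inequality bounds the mixed term `2 R(e₁,e₂,e₃,e₄)` by `(4/3)(Kmax - Kmin)`.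
The isotropic curvature is therefore at least `(4/3)(4 Kmin - Kmax)`, which is positive exactly
when the pinching is strictly better than `1/4`.
-/

noncomputable section
open scoped BigOperators

def dotp {n : ℕ} (X Y : Fin n → ℝ) : ℝ := ∑ i, X i * Y i

def ON4 {n : ℕ} (e₁ e₂ e₃ e₄ : Fin n → ℝ) : Prop :=
  dotp e₁ e₁ = 1 ∧ dotp e₂ e₂ = 1 ∧ dotp e₃ e₃ = 1 ∧ dotp e₄ e₄ = 1 ∧
  dotp e₁ e₂ = 0 ∧ dotp e₁ e₃ = 0 ∧ dotp e₁ e₄ = 0 ∧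
  dotp e₂ e₃ = 0 ∧ dotp e₂ e₄ = 0 ∧ dotp e₃ e₄ = 0

section

variable {n : ℕ} (R : MultilinearMap ℝ (fun _ : Fin 4 => (Fin n → ℝ)) ℝ)

def isotropicCurvature (e₁ e₂ e₃ e₄ : Fin n → ℝ) : ℝ :=
  R ![e₁, e₃, e₁, e₃] + R ![e₁, e₄, e₁, e₄] + R ![e₂, e₃, e₂, e₃]
    + R ![e₂, e₄, e₂, e₄] - 2 * R ![e₁, e₂, e₃, e₄]

variable {R} {Kmin : ℝ}

theorem le_sectional_of_orthonormal
    (hpinch : ∀ X Y : Fin n → ℝ, Kmin * (dotp X X * dotp Y Y - (dotp X Y) ^ 2) ≤ R ![X, Y, X, Y])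
    {X Y : Fin n → ℝ} (hX : dotp X X = 1) (hY : dotp Y Y = 1)
    (hXY : dotp X Y = 0) : Kmin ≤ R ![X, Y, X, Y] := by
  simpa [hX, hY, hXY] using hpinch X Y

theorem isotropicCurvature_ge
    (hpinch : ∀ X Y : Fin n → ℝ, Kmin * (dotp X X * dotp Y Y - (dotp X Y) ^ 2) ≤ R ![X, Y, X, Y])
    {B : ℝ} {e₁ e₂ e₃ e₄ : Fin n → ℝ} (hON : ON4 e₁ e₂ e₃ e₄)
    (hmixed : |R ![e₁, e₂, e₃, e₄]| ≤ B) :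
    4 * Kmin - 2 * B ≤ isotropicCurvature R e₁ e₂ e₃ e₄ := by
  obtain ⟨h₁, h₂, h₃, h₄, -, h₁₃, h₁₄, h₂₃, h₂₄, -⟩ := hON
  have s₁₃ := le_sectional_of_orthonormal hpinch h₁ h₃ h₁₃
  have s₁₄ := le_sectional_of_orthonormal hpinch h₁ h₄ h₁₄
  have s₂₃ := le_sectional_of_orthonormal hpinch h₂ h₃ h₂₃
  have s₂₄ := le_sectional_of_orthonormal hpinch h₂ h₄ h₂₄
  have hmixed' := (abs_le.mp hmixed).2
  unfold isotropicCurvature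
  linarith

end

theorem quarter_pinched_implies_pic {n : ℕ}
    (R : MultilinearMap ℝ (fun _ : Fin 4 => (Fin n → ℝ)) ℝ)
    (Kmin Kmax : ℝ) (hK4 : Kmax < 4 * Kmin)
    (hpinch : ∀ X Y : Fin n → ℝ,
      Kmin * (dotp X X * dotp Y Y - (dotp X Y) ^ 2) ≤ R ![X, Y, X, Y] ∧
      R ![X, Y, X, Y] ≤ Kmax * (dotp X X * dotp Y Y - (dotp X Y) ^ 2))
    (hberger : ∀ e₁ e₂ e₃ e₄ : Fin n → ℝ, ON4 e₁ e₂ e₃ e₄ →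
      |R ![e₁, e₂, e₃, e₄]| ≤ (2 / 3) * (Kmax - Kmin)) :
    ∀ e₁ e₂ e₃ e₄ : Fin n → ℝ, ON4 e₁ e₂ e₃ e₄ →
      0 < R ![e₁, e₃, e₁, e₃] + R ![e₁, e₄, e₁, e₄] + R ![e₂, e₃, e₂, e₃]
          + R ![e₂, e₄, e₂, e₄] - 2 * R ![e₁, e₂, e₃, e₄] := by
  intro e₁ e₂ e₃ e₄ hON
  have hbound : 4 * Kmin - 2 * ((2 / 3) * (Kmax - Kmin)) ≤ isotropicCurvature R e₁ e₂ e₃ e₄ :=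
    isotropicCurvature_ge (fun X Y => (hpinch X Y).1) hON (hberger e₁ e₂ e₃ e₄ hON)
  have hpos : 0 < 4 * Kmin - 2 * ((2 / 3) * (Kmax - Kmin)) := by linarith
  exact hpos.trans_le hbound
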